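/- If the data distribution q(x₀) is a Gaussian mixture Σ_{k=1}^K w_k N(x₀; μ_k, Σ_k), and the forward kernel is q(x_t | x_{t-1}) = N(x_t; √(1-β_t) x_{t-1}, β_t I), then the posterior q(x_{t-1} | x_t) is itself a Gaussian mixture with K components, with weights w'_k ∝ w_k N(x_t; √ᾱ_t μ_k, (1-ᾱ_t)I + ᾱ_t Σ_k), means μ'_k = (I+Λ_k^{-1})^{-1} x_t/√α_t + (I+Λ_k)^{-1} √ᾱ_{t-1} μ_k, and covariances Σ'_k = ((1-α_t)/α_t)(I+Λ_k^{-1})^{-1}, where Λ_k = ((α_t - ᾱ_t)/(1-α_t))I + (ᾱ_t/(1-α_t))Σ_k. -/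

import Mathlib

open Matrix MeasureTheory Real Finset

/-- Density of a `D`-dimensional Gaussian with mean `μ` and covariance `S`. -/
noncomputable def gaussian (D : ℕ) (μ : Fin D → ℝ) (S : Matrix (Fin D) (Fin D) ℝ)
    (x : Fin D → ℝ) : ℝ :=
  (2 * Real.pi) ^ (-(D : ℝ) / 2) * S.det ^ (-(1 : ℝ) / 2) *
    Real.exp (-(1 / 2) * ((x - μ) ⬝ᵥ (S⁻¹ *ᵥ (x - μ))))

/-!
For a Gaussian prior `N(y; m, S)` and the linear-Gaussian kernel `N(x; c y, r I)`, completing the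
square in `y` factors the joint density as the marginal `N(x; c m, r I + c² S)` times the
posterior `N(y; P⁻¹ (c x / r + S⁻¹ m), P⁻¹)` with precision `P = S⁻¹ + (c² / r) I`; the
normalising constants match because `det (r I) det S = det (r I + c² S) det P⁻¹`.
Integrating out `y` (the Gaussian density integrates to one, by whitening with `√S`) shows that
`q_{t-1}` is the mixture with components `N(√ᾱ_{t-1} μ_k, (1 - ᾱ_{t-1}) I + ᾱ_{t-1} Σ_k)`.
Applying the factorisation to each of these components and the kernel from `t-1` to `t`, and
writing `P` through `Λ_k`, gives the posterior mixture.
-/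

namespace Matrix

variable {ι K : Type*}

lemma PosDef.isSymm {A : Matrix ι ι ℝ} (hA : A.PosDef) : A.IsSymm :=
  (conjTranspose_eq_transpose_of_trivial A).symm.trans hA.isHermitian.eq

variable [Fintype ι] [Field K]

lemma IsSymm.dotProduct_mulVec_comm {A : Matrix ι ι K} (hA : A.IsSymm) (x y : ι → K) :
    x ⬝ᵥ A *ᵥ y = y ⬝ᵥ A *ᵥ x := by
  rw [dotProduct_mulVec, ← mulVec_transpose, hA.eq, dotProduct_comm]

variable [DecidableEq ι]

lemma inv_smul_of_ne_zero {t : K} (ht : t ≠ 0) (A : Matrix ι ι K) : (t • A)⁻¹ = t⁻¹ • A⁻¹ := by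
  have h : (t • (1 : Matrix ι ι K))⁻¹ = t⁻¹ • 1 := inv_eq_right_inv (by simp [ht])
  calc (t • A)⁻¹ = (t • 1 * A)⁻¹ := by rw [smul_mul, one_mul]
    _ = t⁻¹ • A⁻¹ := by rw [mul_inv_rev, h, Matrix.mul_smul, mul_one]

lemma inv_one_add_inv_smul {t : K} (ht : t ≠ 0) (A : Matrix ι ι K) :
    (1 + (t • A)⁻¹)⁻¹ = t • (A⁻¹ + t • 1)⁻¹ := by
  have h : 1 + t⁻¹ • A⁻¹ = t⁻¹ • (A⁻¹ + t • 1) := by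
    rw [smul_add, smul_smul, inv_mul_cancel₀ ht, one_smul, add_comm]
  rw [inv_smul_of_ne_zero ht, h, inv_smul_of_ne_zero (inv_ne_zero ht), inv_inv]

lemma inv_one_add_smul {A : Matrix ι ι K} (hA : IsUnit A.det) (t : K) :
    (1 + t • A)⁻¹ = (A⁻¹ + t • 1)⁻¹ * A⁻¹ := by
  rw [← mul_inv_rev, Matrix.mul_add, mul_nonsing_inv _ hA, Matrix.mul_smul, mul_one]

lemma PosDef.inv_add_smul_one {S : Matrix ι ι ℝ} (hS : S.PosDef) {t : ℝ} (ht : 0 ≤ t) :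
    (S⁻¹ + t • 1).PosDef :=
  hS.inv.add_posSemidef (PosSemidef.one.smul ht)

lemma measurableEmbedding_toLin' {Q : Matrix ι ι ℝ} (hQ : Q.det ≠ 0) :
    MeasurableEmbedding (toLin' Q) :=
  (toLinearEquiv' Q (Q.invertibleOfIsUnitDet hQ.isUnit)).toContinuousLinearEquiv.toHomeomorph
    |>.measurableEmbedding

lemma integrable_comp_mulVec_iff {Q : Matrix ι ι ℝ} (hQ : Q.det ≠ 0) {f : (ι → ℝ) → ℝ} :
    Integrable (fun x => f (Q *ᵥ x)) ↔ Integrable f := by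
  have h := (measurableEmbedding_toLin' hQ).integrable_map_iff (g := f) (μ := volume)
  rw [Real.map_matrix_volume_pi_eq_smul_volume_pi hQ,
    integrable_smul_measure (by simpa using hQ) ENNReal.ofReal_ne_top] at h
  exact h.symm

lemma integral_comp_mulVec {Q : Matrix ι ι ℝ} (hQ : Q.det ≠ 0) (f : (ι → ℝ) → ℝ) :
    ∫ x, f (Q *ᵥ x) = |Q.det|⁻¹ * ∫ y, f y := by
  have h := (measurableEmbedding_toLin' hQ).integral_map (μ := volume) f
  rw [Real.map_matrix_volume_pi_eq_smul_volume_pi hQ, integral_smul_measure,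
    ENNReal.toReal_ofReal (abs_nonneg _), abs_inv, smul_eq_mul] at h
  exact h.symm
open scoped MatrixOrder in
lemma PosDef.exists_whitening {S : Matrix ι ι ℝ} (hS : S.PosDef) :
    ∃ Q : Matrix ι ι ℝ, Q.det ^ 2 = S.det ∧ ∀ y, (Q *ᵥ y) ⬝ᵥ S⁻¹ *ᵥ (Q *ᵥ y) = y ⬝ᵥ y := by
  set Q := CFC.sqrt S
  have hQS : Q * Q = S := CFC.sqrt_mul_sqrt_self S hS.posSemidef.nonneg
  have hQ : Q.IsSymm := (conjTranspose_eq_transpose_of_trivial _).symm.trans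
    (CFC.sqrt_nonneg S).posSemidef.isHermitian.eq
  have hQu : IsUnit Q.det := by
    have hSu := (isUnit_iff_isUnit_det S).mp hS.isUnit
    rw [← hQS, det_mul, IsUnit.mul_iff] at hSu
    exact hSu.1
  have hinv : Q * S⁻¹ * Q = 1 := by
    rw [← hQS, mul_inv_rev, ← Matrix.mul_assoc, mul_nonsing_inv _ hQu, one_mul,
      nonsing_inv_mul _ hQu]
  refine ⟨Q, by rw [sq, ← det_mul, hQS], fun y => ?_⟩
  rw [dotProduct_comm, ← hQ.dotProduct_mulVec_comm, mulVec_mulVec, mulVec_mulVec, hinv,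
    one_mulVec]

end Matrix

section GaussianIntegral

variable {ι : Type*} [Fintype ι]

lemma exp_neg_half_dotProduct_self_eq_prod (x : ι → ℝ) :
    rexp (-(1 / 2) * (x ⬝ᵥ x)) = ∏ i, rexp (-(1 / 2) * x i ^ 2) := by
  simp only [dotProduct, Finset.mul_sum, ← Real.exp_sum, sq]

lemma integrable_exp_neg_half_dotProduct_self :
    Integrable (fun x : ι → ℝ => rexp (-(1 / 2) * (x ⬝ᵥ x))) := by
  simp only [exp_neg_half_dotProduct_self_eq_prod]
  exact Integrable.fintype_prod (f := fun _ t => rexp (-(1 / 2) * t ^ 2))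
    fun _ => integrable_exp_neg_mul_sq (by norm_num)

lemma integral_exp_neg_half_dotProduct_self :
    ∫ x : ι → ℝ, rexp (-(1 / 2) * (x ⬝ᵥ x)) = (2 * π) ^ ((Fintype.card ι : ℝ) / 2) := by
  simp only [exp_neg_half_dotProduct_self_eq_prod]
  rw [integral_fintype_prod_volume_eq_pow (fun t : ℝ => rexp (-(1 / 2) * t ^ 2)),
    integral_gaussian, ← Real.rpow_natCast, Real.sqrt_eq_rpow, ← Real.rpow_mul (by positivity)]
  ring_nf

variable [DecidableEq ι] {S : Matrix ι ι ℝ}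

lemma integrable_exp_neg_half_dotProduct_inv_mulVec (hS : S.PosDef) :
    Integrable (fun x : ι → ℝ => rexp (-(1 / 2) * (x ⬝ᵥ S⁻¹ *ᵥ x))) := by
  obtain ⟨Q, hdet, hQ⟩ := hS.exists_whitening
  have hQ0 : Q.det ≠ 0 := fun h => by simp [h, hS.det_pos.ne] at hdet
  rw [← integrable_comp_mulVec_iff hQ0]
  simpa only [hQ] using integrable_exp_neg_half_dotProduct_self

lemma integral_exp_neg_half_dotProduct_inv_mulVec (hS : S.PosDef) :
    ∫ x : ι → ℝ, rexp (-(1 / 2) * (x ⬝ᵥ S⁻¹ *ᵥ x)) =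
      √S.det * (2 * π) ^ ((Fintype.card ι : ℝ) / 2) := by
  obtain ⟨Q, hdet, hQ⟩ := hS.exists_whitening
  have hQ0 : Q.det ≠ 0 := fun h => by simp [h, hS.det_pos.ne] at hdet
  have h := integral_comp_mulVec hQ0 fun x => rexp (-(1 / 2) * (x ⬝ᵥ S⁻¹ *ᵥ x))
  simp only [hQ, integral_exp_neg_half_dotProduct_self] at h
  rw [← hdet, Real.sqrt_sq_eq_abs, h]
  field_simp

end GaussianIntegral

section LinearGaussian

variable {ι : Type*} [Fintype ι] [DecidableEq ι] {S : Matrix ι ι ℝ} {r : ℝ}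

lemma smul_mul_inv_add_smul_one (hS : IsUnit S.det) (hr : r ≠ 0) (c : ℝ) :
    r • (S * (S⁻¹ + (c ^ 2 / r) • 1)) = r • 1 + c ^ 2 • S := by
  rw [Matrix.mul_add, mul_nonsing_inv _ hS, Matrix.mul_smul, Matrix.mul_one, smul_add, smul_smul,
    mul_div_cancel₀ _ hr]

lemma inv_smul_one_add_sq_smul_add (hS : S.PosDef) (hr : 0 < r) (c : ℝ) :
    (r • 1 + c ^ 2 • S)⁻¹ + (c / r) ^ 2 • (S⁻¹ + (c ^ 2 / r) • 1)⁻¹ = r⁻¹ • 1 := by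
  set P := S⁻¹ + (c ^ 2 / r) • 1 with hP
  have hPu : IsUnit P.det :=
    (isUnit_iff_isUnit_det P).mp (hS.inv_add_smul_one (by positivity)).isUnit
  rw [← smul_mul_inv_add_smul_one ((isUnit_iff_isUnit_det S).mp hS.isUnit) hr.ne',
    inv_smul_of_ne_zero hr.ne', Matrix.mul_inv_rev, ← hP, ← nonsing_inv_mul _ hPu]
  conv_rhs => rw [hP, Matrix.mul_add, Matrix.mul_smul, Matrix.mul_one, smul_add, smul_smul]
  congr 2
  field_simp

lemma completing_square (hS : S.PosDef) (hr : 0 < r) (c : ℝ) (m x y : ι → ℝ) :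
    r⁻¹ * ((x - c • y) ⬝ᵥ (x - c • y)) + (y - m) ⬝ᵥ S⁻¹ *ᵥ (y - m) =
      (x - c • m) ⬝ᵥ (r • 1 + c ^ 2 • S)⁻¹ *ᵥ (x - c • m) +
        (y - (S⁻¹ + (c ^ 2 / r) • 1)⁻¹ *ᵥ ((c / r) • x + S⁻¹ *ᵥ m)) ⬝ᵥ (S⁻¹ + (c ^ 2 / r) • 1) *ᵥ
          (y - (S⁻¹ + (c ^ 2 / r) • 1)⁻¹ *ᵥ ((c / r) • x + S⁻¹ *ᵥ m)) := by
  set P := S⁻¹ + (c ^ 2 / r) • 1 with hP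
  have hPd : P.PosDef := hS.inv_add_smul_one (by positivity)
  have hPu : IsUnit P.det := (isUnit_iff_isUnit_det P).mp hPd.isUnit
  -- In the coordinates `u = x - c m`, `v = y - m` the posterior mean is `m + (c / r) P⁻¹ u`,
  -- and all terms not involving `v` collect into `inv_smul_one_add_sq_smul_add`.
  have hmean : P⁻¹ *ᵥ ((c / r) • x + S⁻¹ *ᵥ m) = m + (c / r) • P⁻¹ *ᵥ (x - c • m) := by
    have h : (c / r) • x + S⁻¹ *ᵥ m = (c / r) • (x - c • m) + P *ᵥ m := by
      rw [hP, add_mulVec, smul_mulVec, one_mulVec]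
      module
    rw [h, mulVec_add, mulVec_mulVec, nonsing_inv_mul _ hPu, one_mulVec, mulVec_smul, add_comm]
  set u := x - c • m with hu
  set v := y - m with hv
  have hx : x - c • y = u - c • v := by rw [hu, hv]; module
  have hy : y - (m + (c / r) • P⁻¹ *ᵥ u) = v - (c / r) • P⁻¹ *ᵥ u := by rw [hv]; abel
  have hSinv : S⁻¹ = P - (c ^ 2 / r) • 1 := by rw [hP]; abel
  have hPP : P *ᵥ P⁻¹ *ᵥ u = u := by rw [mulVec_mulVec, mul_nonsing_inv _ hPu, one_mulVec]
  have hcross : (P⁻¹ *ᵥ u) ⬝ᵥ P *ᵥ v = u ⬝ᵥ v := by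
    rw [hPd.isSymm.dotProduct_mulVec_comm, hPP, dotProduct_comm]
  have key : u ⬝ᵥ (r • 1 + c ^ 2 • S)⁻¹ *ᵥ u + (c / r) ^ 2 * (u ⬝ᵥ P⁻¹ *ᵥ u) =
      r⁻¹ * (u ⬝ᵥ u) := by
    simpa [add_mulVec, smul_mulVec, dotProduct_add, dotProduct_smul] using
      congrArg (fun A => u ⬝ᵥ A *ᵥ u) (inv_smul_one_add_sq_smul_add hS hr c)
  rw [hmean, hx, hy, hSinv]
  simp only [sub_mulVec, mulVec_sub, smul_mulVec, mulVec_smul, one_mulVec, hPP, dotProduct_sub,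
    sub_dotProduct, dotProduct_smul, smul_dotProduct, smul_eq_mul, hcross]
  rw [dotProduct_comm v u, dotProduct_comm (P⁻¹ *ᵥ u) u]
  linear_combination (-1 : ℝ) * key

lemma det_smul_one_mul_det (hS : S.PosDef) (hr : 0 < r) (c : ℝ) :
    (r • (1 : Matrix ι ι ℝ)).det * S.det =
      (r • 1 + c ^ 2 • S).det * ((S⁻¹ + (c ^ 2 / r) • 1)⁻¹).det := by
  have hP := (hS.inv_add_smul_one (t := c ^ 2 / r) (by positivity)).det_pos
  rw [← smul_mul_inv_add_smul_one ((isUnit_iff_isUnit_det S).mp hS.isUnit) hr.ne' c, det_smul,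
    det_smul, det_one, det_mul, det_nonsing_inv, Ring.inverse_eq_inv']
  field_simp

end LinearGaussian

section GaussianDensity

variable {D : ℕ} {S : Matrix (Fin D) (Fin D) ℝ} {r : ℝ}

lemma integrable_gaussian (μ : Fin D → ℝ) (hS : S.PosDef) : Integrable (gaussian D μ S) :=
  ((integrable_exp_neg_half_dotProduct_inv_mulVec hS).comp_sub_right μ).const_mul _

lemma integral_gaussian_eq_one (μ : Fin D → ℝ) (hS : S.PosDef) : ∫ x, gaussian D μ S x = 1 := by
  simp only [gaussian]
  rw [integral_const_mul, integral_sub_right_eq_self (fun x => rexp (-(1 / 2) * (x ⬝ᵥ S⁻¹ *ᵥ x))),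
    integral_exp_neg_half_dotProduct_inv_mulVec hS, Fintype.card_fin, Real.sqrt_eq_rpow]
  have hdet := hS.det_pos
  rw [neg_div, Real.rpow_neg (by positivity), neg_div, Real.rpow_neg hdet.le]
  field_simp

theorem gaussian_mul_gaussian (hr : 0 < r) (c : ℝ) (hS : S.PosDef) (m x y : Fin D → ℝ) :
    gaussian D (c • y) (r • 1) x * gaussian D m S y =
      gaussian D (c • m) (r • 1 + c ^ 2 • S) x *
        gaussian D ((S⁻¹ + (c ^ 2 / r) • 1)⁻¹ *ᵥ ((c / r) • x + S⁻¹ *ᵥ m))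
          (S⁻¹ + (c ^ 2 / r) • 1)⁻¹ y := by
  have hR : (r • (1 : Matrix (Fin D) (Fin D) ℝ)).PosDef := PosDef.one.smul hr
  have hP : (S⁻¹ + (c ^ 2 / r) • 1).PosDef := hS.inv_add_smul_one (by positivity)
  have hM : (r • 1 + c ^ 2 • S).PosDef := hR.add_posSemidef (hS.posSemidef.smul (sq_nonneg c))
  have hdet : (r • (1 : Matrix (Fin D) (Fin D) ℝ)).det ^ (-(1 : ℝ) / 2) * S.det ^ (-(1 : ℝ) / 2) =
      (r • 1 + c ^ 2 • S).det ^ (-(1 : ℝ) / 2) *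
        ((S⁻¹ + (c ^ 2 / r) • 1)⁻¹).det ^ (-(1 : ℝ) / 2) := by
    rw [← mul_rpow hR.det_pos.le hS.det_pos.le, ← mul_rpow hM.det_pos.le hP.inv.det_pos.le,
      det_smul_one_mul_det hS hr c]
  have hRinv : ∀ v : Fin D → ℝ, v ⬝ᵥ (r • 1)⁻¹ *ᵥ v = r⁻¹ * (v ⬝ᵥ v) := fun v => by
    rw [inv_smul_of_ne_zero hr.ne', inv_one, smul_mulVec, one_mulVec, dotProduct_smul, smul_eq_mul]
  have hexp := congrArg (fun q => rexp (-(1 / 2) * q)) (completing_square hS hr c m x y)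
  simp only [mul_add, exp_add] at hexp
  simp only [gaussian, hRinv, nonsing_inv_nonsing_inv _ ((isUnit_iff_isUnit_det _).mp hP.isUnit)]
  rw [mul_mul_mul_comm, hexp, mul_mul_mul_comm ((2 * π) ^ (-(D : ℝ) / 2)), hdet]
  ring

lemma integrable_gaussian_mul_gaussian (hr : 0 < r) (c : ℝ) (hS : S.PosDef) (m x : Fin D → ℝ) :
    Integrable fun y => gaussian D (c • y) (r • 1) x * gaussian D m S y := by
  simp_rw [gaussian_mul_gaussian hr c hS]
  exact (integrable_gaussian _ (hS.inv_add_smul_one (by positivity)).inv).const_mul _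

lemma integral_gaussian_mul_gaussian (hr : 0 < r) (c : ℝ) (hS : S.PosDef) (m x : Fin D → ℝ) :
    ∫ y, gaussian D (c • y) (r • 1) x * gaussian D m S y =
      gaussian D (c • m) (r • 1 + c ^ 2 • S) x := by
  simp_rw [gaussian_mul_gaussian hr c hS]
  rw [integral_const_mul, integral_gaussian_eq_one _ (hS.inv_add_smul_one (by positivity)).inv,
    mul_one]

lemma integral_gaussian_mul_mixture {κ : Type*} [Fintype κ] (hr : 0 < r) (c : ℝ)
    {S : κ → Matrix (Fin D) (Fin D) ℝ} (hS : ∀ k, (S k).PosDef) (w : κ → ℝ)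
    (μ : κ → Fin D → ℝ) (x : Fin D → ℝ) :
    ∫ y, gaussian D (c • y) (r • 1) x * ∑ k, w k * gaussian D (μ k) (S k) y =
      ∑ k, w k * gaussian D (c • μ k) (r • 1 + c ^ 2 • S k) x := by
  simp_rw [Finset.mul_sum, mul_left_comm _ (w _)]
  rw [integral_finsetSum _ fun k _ =>
    (integrable_gaussian_mul_gaussian hr c (hS k) (μ k) x).const_mul (w k)]
  simp_rw [integral_const_mul, integral_gaussian_mul_gaussian hr c (hS _)]

theorem gaussian_sqrt_smul_mul_gaussian {α : ℝ} (hα0 : 0 < α) (hα1 : α < 1) (hS : S.PosDef)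
    (m x y : Fin D → ℝ) :
    gaussian D (√α • y) ((1 - α) • 1) x * gaussian D m S y =
      gaussian D (√α • m) ((1 - α) • 1 + α • S) x *
        gaussian D ((1 + ((α / (1 - α)) • S)⁻¹)⁻¹ *ᵥ ((1 / √α) • x) +
            (1 + (α / (1 - α)) • S)⁻¹ *ᵥ m)
          (((1 - α) / α) • (1 + ((α / (1 - α)) • S)⁻¹)⁻¹) y := by
  have h1α : 1 - α ≠ 0 := (sub_pos.2 hα1).ne'
  have hcov : (1 - α) / α * (α / (1 - α)) = 1 := by field_simp
  rw [gaussian_mul_gaussian (sub_pos.2 hα1) √α hS, Real.sq_sqrt hα0.le,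
    inv_one_add_inv_smul (div_ne_zero hα0.ne' h1α),
    inv_one_add_smul ((isUnit_iff_isUnit_det S).mp hS.isUnit), smul_smul, hcov, one_smul]
  congr 3
  rw [mulVec_add, mulVec_smul, smul_mulVec, mulVec_smul, smul_smul, ← mulVec_mulVec]
  congr 3
  field_simp
  rw [Real.sq_sqrt hα0.le]

end GaussianDensity

-- `αt = 1 - β_t`, `abar = ᾱ_t`, `abarPrev = ᾱ_{t-1}`.
theorem posterior_of_gaussian_mixture_is_gaussian_mixture_general
    (D K : ℕ) (w : Fin K → ℝ)
    (μk : Fin K → Fin D → ℝ) (Sk : Fin K → Matrix (Fin D) (Fin D) ℝ)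
    (hSk : ∀ k, (Sk k).PosDef)
    (αt abar abarPrev : ℝ) (hα0 : 0 < αt) (hα1 : αt < 1)
    (habarPrev0 : 0 < abarPrev) (habarPrev1 : abarPrev ≤ 1)
    (habar : abar = αt * abarPrev)
    -- the data distribution: a Gaussian mixture
    (q0 : (Fin D → ℝ) → ℝ) (hq0 : q0 = fun x => ∑ k, w k * gaussian D (μk k) (Sk k) x)
    -- the marginal of the forward process at time `t-1`
    (qPrev : (Fin D → ℝ) → ℝ)
    (hqPrev : qPrev = if abarPrev = 1 then q0 else fun x =>
      ∫ x₀ : Fin D → ℝ,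
        gaussian D (Real.sqrt abarPrev • x₀)
          ((1 - abarPrev) • (1 : Matrix (Fin D) (Fin D) ℝ)) x * q0 x₀)
    -- the marginal of the forward process at time `t`
    (qCur : (Fin D → ℝ) → ℝ)
    -- the posterior `q(x_{t-1} | x_t)` via Bayes' rule
    (post : (Fin D → ℝ) → (Fin D → ℝ) → ℝ)
    (hpost : post = fun xt xtm1 =>
      gaussian D (Real.sqrt αt • xtm1)
        ((1 - αt) • (1 : Matrix (Fin D) (Fin D) ℝ)) xt * qPrev xtm1 / qCur xt) :
    ∀ xt xtm1 : Fin D → ℝ,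
      post xt xtm1 =
        ∑ k, (w k / qCur xt *
              gaussian D (Real.sqrt abar • μk k)
                ((1 - abar) • (1 : Matrix (Fin D) (Fin D) ℝ) + abar • Sk k) xt) *
          gaussian D
            ((((1 : Matrix (Fin D) (Fin D) ℝ) +
                (((αt - abar) / (1 - αt)) • (1 : Matrix (Fin D) (Fin D) ℝ) +
                  (abar / (1 - αt)) • Sk k)⁻¹)⁻¹ *ᵥ ((1 / Real.sqrt αt) • xt)) +
              (((1 : Matrix (Fin D) (Fin D) ℝ) +
                (((αt - abar) / (1 - αt)) • (1 : Matrix (Fin D) (Fin D) ℝ) +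
                  (abar / (1 - αt)) • Sk k))⁻¹ *ᵥ (Real.sqrt abarPrev • μk k)))
            (((1 - αt) / αt) •
              ((1 : Matrix (Fin D) (Fin D) ℝ) +
                (((αt - abar) / (1 - αt)) • (1 : Matrix (Fin D) (Fin D) ℝ) +
                  (abar / (1 - αt)) • Sk k)⁻¹)⁻¹)
            xtm1 := by
  intro xt xtm1
  set Sb := fun k => (1 - abarPrev) • (1 : Matrix (Fin D) (Fin D) ℝ) + abarPrev • Sk k
  have hSb : ∀ k, (Sb k).PosDef := fun k =>
    PosDef.posSemidef_add (PosSemidef.one.smul (sub_nonneg.2 habarPrev1)) ((hSk k).smul habarPrev0)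
  have hqPrev' : qPrev xtm1 = ∑ k, w k * gaussian D (√abarPrev • μk k) (Sb k) xtm1 := by
    subst hqPrev hq0
    split_ifs with hb
    · simp [Sb, hb]
    · simpa [Real.sq_sqrt habarPrev0.le] using integral_gaussian_mul_mixture
        (sub_pos.2 (lt_of_le_of_ne habarPrev1 hb)) √abarPrev hSk w μk xtm1
  have hΛ : ∀ k, ((αt - abar) / (1 - αt)) • (1 : Matrix (Fin D) (Fin D) ℝ) +
      (abar / (1 - αt)) • Sk k = (αt / (1 - αt)) • Sb k := fun k => by
    simp only [Sb, habar, smul_add, smul_smul]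
    congr 2 <;> ring
  have hM : ∀ k, (1 - abar) • (1 : Matrix (Fin D) (Fin D) ℝ) + abar • Sk k =
      (1 - αt) • 1 + αt • Sb k := fun k => by
    simp only [Sb, habar, smul_add, smul_smul]
    module
  have hμ : ∀ k, √abar • μk k = √αt • √abarPrev • μk k := fun k => by
    rw [smul_smul, habar, Real.sqrt_mul hα0.le]
  subst hpost
  beta_reduce
  rw [hqPrev', Finset.mul_sum, Finset.sum_div]
  refine Finset.sum_congr rfl fun k _ => ?_
  rw [hΛ, hM, hμ, mul_left_comm, gaussian_sqrt_smul_mul_gaussian hα0 hα1 (hSb k)]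
  ring

/-- The posterior of the diffusion forward process for a Gaussian mixture data
distribution is itself a Gaussian mixture with the stated weights, means, and
covariances. Here `αt = 1 - β_t ∈ (0,1)`, `abar = ᾱ_t`, `abarPrev = ᾱ_{t-1}`
(so `abar = αt * abarPrev`). -/
theorem posterior_of_gaussian_mixture_is_gaussian_mixture
    (D K : ℕ) (w : Fin K → ℝ) (hw : ∀ k, 0 < w k) (hw1 : ∑ k, w k = 1)
    (μk : Fin K → Fin D → ℝ) (Sk : Fin K → Matrix (Fin D) (Fin D) ℝ)
    (hSk : ∀ k, (Sk k).PosDef)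
    (αt abar abarPrev : ℝ) (hα0 : 0 < αt) (hα1 : αt < 1)
    (habarPrev0 : 0 < abarPrev) (habarPrev1 : abarPrev ≤ 1)
    (habar : abar = αt * abarPrev)
    -- the data distribution: a Gaussian mixture
    (q0 : (Fin D → ℝ) → ℝ) (hq0 : q0 = fun x => ∑ k, w k * gaussian D (μk k) (Sk k) x)
    -- the marginal of the forward process at time `t-1`
    (qPrev : (Fin D → ℝ) → ℝ)
    (hqPrev : qPrev = if abarPrev = 1 then q0 else fun x =>
      ∫ x₀ : Fin D → ℝ,
        gaussian D (Real.sqrt abarPrev • x₀)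
          ((1 - abarPrev) • (1 : Matrix (Fin D) (Fin D) ℝ)) x * q0 x₀)
    -- the marginal of the forward process at time `t`
    (qCur : (Fin D → ℝ) → ℝ)
    (hqCur : qCur = fun x =>
      ∫ x' : Fin D → ℝ,
        gaussian D (Real.sqrt αt • x')
          ((1 - αt) • (1 : Matrix (Fin D) (Fin D) ℝ)) x * qPrev x')
    -- the posterior `q(x_{t-1} | x_t)` via Bayes' rule
    (post : (Fin D → ℝ) → (Fin D → ℝ) → ℝ)
    (hpost : post = fun xt xtm1 =>
      gaussian D (Real.sqrt αt • xtm1)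
        ((1 - αt) • (1 : Matrix (Fin D) (Fin D) ℝ)) xt * qPrev xtm1 / qCur xt) :
    ∀ xt xtm1 : Fin D → ℝ,
      post xt xtm1 =
        ∑ k, (w k / qCur xt *
              gaussian D (Real.sqrt abar • μk k)
                ((1 - abar) • (1 : Matrix (Fin D) (Fin D) ℝ) + abar • Sk k) xt) *
          gaussian D
            ((((1 : Matrix (Fin D) (Fin D) ℝ) +
                (((αt - abar) / (1 - αt)) • (1 : Matrix (Fin D) (Fin D) ℝ) +
                  (abar / (1 - αt)) • Sk k)⁻¹)⁻¹ *ᵥ ((1 / Real.sqrt αt) • xt)) +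
              (((1 : Matrix (Fin D) (Fin D) ℝ) +
                (((αt - abar) / (1 - αt)) • (1 : Matrix (Fin D) (Fin D) ℝ) +
                  (abar / (1 - αt)) • Sk k))⁻¹ *ᵥ (Real.sqrt abarPrev • μk k)))
            (((1 - αt) / αt) •
              ((1 : Matrix (Fin D) (Fin D) ℝ) +
                (((αt - abar) / (1 - αt)) • (1 : Matrix (Fin D) (Fin D) ℝ) +
                  (abar / (1 - αt)) • Sk k)⁻¹)⁻¹)
            xtm1 :=
  posterior_of_gaussian_mixture_is_gaussian_mixture_general D K w μk Sk hSk αt abar abarPrev hα0 hα1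
    habarPrev0 habarPrev1 habar q0 hq0 qPrev hqPrev qCur post hpost
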